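/- arXiv:2505.16213 — 4 statements merged into one kernel-verified Lean document; each statement's English description precedes it below -/
import Mathlib

section
/- Let ω_1, ω_2, … be i.i.d. random variables distributed on [-a/2, a/2] with continuous, strictly increasing distribution function F. Let ω_{(1)}^n < ⋯ < ω_{(n)}^n denote the order statistics of ω_1, …, ω_n (the ordering being strict almost surely), and let ν_n(i) = n ∫_{(i-1)/n}^{i/n} F⁻¹(x) dx. Then max_{i ∈ [n]} |ω_{(i)}^n − ν_n(i)| → 0 almost surely as n → ∞. -/
open MeasureTheory ProbabilityTheory Filter Topology intervalIntegral




lemma count_below (n : ℕ) (v w : ℕ → ℝ) (e : Equiv.Perm (Fin n))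
    (he : ∀ m : Fin n, w ((m : ℕ) + 1) = v (e m))
    (hw : StrictMonoOn w (Set.Icc 1 n)) (i : ℕ) (h1i : 1 ≤ i) (hin : i ≤ n) :
    ((Finset.range n).filter (fun j => v j < w i)).card = i - 1 := by
  have hiI : i ∈ Set.Icc 1 n := ⟨h1i, hin⟩
  have key : ∀ m : Fin n, (v (e m) < w i ↔ (m : ℕ) < i - 1) := by
    intro m
    have hmI : (m : ℕ) + 1 ∈ Set.Icc 1 n := ⟨by omega, by have := m.isLt; omega⟩
    rw [← he m, hw.lt_iff_lt hmI hiI]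
    omega
  have hcard : ((Finset.range n).filter (fun j => v j < w i)).card
      = ((Finset.range n).filter (fun m => m < i - 1)).card := by
    refine Finset.card_bij'
      (fun j hj => ((e.symm ⟨j, Finset.mem_range.1 (Finset.mem_filter.1 hj).1⟩ : Fin n) : ℕ))
      (fun m hm => ((e ⟨m, Finset.mem_range.1 (Finset.mem_filter.1 hm).1⟩ : Fin n) : ℕ))
      ?_ ?_ ?_ ?_
    · intro j hj
      have hj' := Finset.mem_filter.1 hj
      have hjn := Finset.mem_range.1 hj'.1
      refine Finset.mem_filter.2 ⟨Finset.mem_range.2 (e.symm ⟨j, hjn⟩).isLt, ?_⟩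
      have := (key (e.symm ⟨j, hjn⟩)).mp
      rw [Equiv.apply_symm_apply] at this
      exact this hj'.2
    · intro m hm
      have hm' := Finset.mem_filter.1 hm
      have hmn := Finset.mem_range.1 hm'.1
      refine Finset.mem_filter.2 ⟨Finset.mem_range.2 (e ⟨m, hmn⟩).isLt, ?_⟩
      exact (key ⟨m, hmn⟩).mpr hm'.2
    · intro j hj
      simp only [Fin.eta, Equiv.apply_symm_apply]
    · intro m hm
      simp only [Fin.eta, Equiv.symm_apply_apply]
  rw [hcard]
  have : (Finset.range n).filter (fun m => m < i - 1) = Finset.range (i - 1) := by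
    ext m
    simp only [Finset.mem_filter, Finset.mem_range]
    omega
  rw [this, Finset.card_range]


/-- Deterministic Glivenko–Cantelli grid bound. -/
lemma unif_bound (G H : ℝ → ℝ) (hG : Monotone G) (hH : Monotone H)
    (hG0 : ∀ t, 0 ≤ G t) (hG1 : ∀ t, G t ≤ 1) (hH0 : ∀ t, 0 ≤ H t) (hH1 : ∀ t, H t ≤ 1)
    (k : ℕ) (hk : 1 ≤ k) (ts : ℕ → ℝ)
    (hts : ∀ j ≤ k, G (ts j) = (j : ℝ) / k)
    (δ : ℝ) (hgrid : ∀ j ≤ k, |H (ts j) - G (ts j)| < δ / 2)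
    (hkδ : 1 / (k : ℝ) < δ / 2) : ∀ t, |H t - G t| < δ := by
  have hkpos : (0 : ℝ) < k := by positivity
  have hδpos : 0 < δ := by
    have : (0 : ℝ) < 1 / k := by positivity
    linarith
  intro t
  have hG00 : G (ts 0) = 0 := by simpa using hts 0 (by omega)
  have hGk1 : G (ts k) = 1 := by rw [hts k le_rfl]; field_simp
  rcases le_or_gt t (ts 0) with ht0 | ht0
  · -- left tail
    have hGt : G t = 0 := le_antisymm (by simpa [hG00] using hG ht0) (hG0 t)
    have h1 : H t ≤ H (ts 0) := hH ht0
    have h2 : H (ts 0) - G (ts 0) < δ / 2 := (abs_lt.1 (hgrid 0 (by omega))).2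
    rw [hGt]
    rw [abs_lt]
    constructor
    · have := hH0 t; linarith
    · rw [hG00] at h2; linarith
  rcases lt_or_ge (ts k) t with htk | htk
  · -- right tail
    have hGt : G t = 1 := le_antisymm (hG1 t) (by simpa [hGk1] using hG htk.le)
    have h1 : H (ts k) ≤ H t := hH htk.le
    have h2 : G (ts k) - H (ts k) < δ / 2 := (abs_lt.1 (hgrid k le_rfl)).1 |> fun h => by
      have := abs_lt.1 (hgrid k le_rfl); linarith [this.1]
    rw [hGt, abs_lt]
    constructor
    · rw [hGk1] at h2; linarith
    · have := hH1 t; linarith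
  · -- middle
    set A := (Finset.range (k + 1)).filter (fun j => ts j < t) with hA
    have hAne : A.Nonempty := ⟨0, by simp [hA, Finset.mem_filter]; exact ht0⟩
    set j := A.max' hAne with hj
    have hjA : j ∈ A := A.max'_mem hAne
    have hjk : j ≤ k := by
      have := (Finset.mem_filter.1 hjA).1
      simpa [Nat.lt_succ_iff] using this
    have hjt : ts j < t := (Finset.mem_filter.1 hjA).2
    have hjk' : j < k := by
      rcases lt_or_eq_of_le hjk with h | h
      · exact h
      · exfalso; rw [h] at hjt; linarith
    have hmax : ¬ (ts (j + 1) < t) := by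
      intro hcon
      have : j + 1 ∈ A := Finset.mem_filter.2 ⟨Finset.mem_range.2 (by omega), hcon⟩
      have := A.le_max' _ this
      omega
    push_neg at hmax
    have hGj : G (ts j) = (j : ℝ) / k := hts j hjk
    have hGj1 : G (ts (j + 1)) = ((j : ℝ) + 1) / k := by
      have := hts (j + 1) (by omega); push_cast at this; exact this
    have hdiff : G (ts (j + 1)) - G (ts j) = 1 / k := by rw [hGj, hGj1]; field_simp; ring
    have e1 : |H (ts j) - G (ts j)| < δ / 2 := hgrid j hjk
    have e2 : |H (ts (j + 1)) - G (ts (j + 1))| < δ / 2 := hgrid (j + 1) (by omega)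
    have b1 : H t ≤ H (ts (j + 1)) := hH hmax
    have b2 : H (ts j) ≤ H t := hH hjt.le
    have b3 : G (ts j) ≤ G t := hG hjt.le
    have b4 : G t ≤ G (ts (j + 1)) := hG hmax
    rw [abs_lt] at e1 e2 ⊢
    constructor <;> nlinarith [e1.1, e1.2, e2.1, e2.2]


lemma lln_indicator {Ω : Type*} [MeasureSpace Ω] [IsProbabilityMeasure (ℙ : Measure Ω)]
    (X : ℕ → Ω → ℝ) (hmeas : ∀ i, Measurable (X i))
    (hindep : iIndepFun X ℙ)
    (hident : ∀ i, IdentDistrib (X i) (X 0) ℙ ℙ) (t : ℝ) :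
    ∀ᵐ x ∂(ℙ : Measure Ω),
      Tendsto (fun n : ℕ =>
          (((Finset.range n).filter (fun j => X j x < t)).card : ℝ) / n)
        atTop (𝓝 ((ℙ {x | X 0 x < t}).toReal)) := by
  set φ : ℝ → ℝ := Set.indicator (Set.Iio t) (fun _ => (1 : ℝ)) with hφ
  have hφm : Measurable φ := measurable_const.indicator measurableSet_Iio
  set Y : ℕ → Ω → ℝ := fun j => φ ∘ X j with hY
  have hint : Integrable (Y 0) ℙ := by
    have : Y 0 = Set.indicator (X 0 ⁻¹' Set.Iio t) (fun _ => (1 : ℝ)) := by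
      ext x
      simp [hY, hφ, Set.indicator_apply, Set.mem_preimage]; rfl
    rw [this]
    exact (integrable_const (1 : ℝ)).indicator (hmeas 0 measurableSet_Iio)
  have hindep' : Pairwise (Function.onFun (IndepFun · · ℙ) Y) := by
    intro i j hij
    exact (hindep.indepFun hij).comp hφm hφm
  have hident' : ∀ i, IdentDistrib (Y i) (Y 0) ℙ ℙ := fun i => (hident i).comp hφm
  have hmean : (ℙ : Measure Ω)[Y 0] = (ℙ {x | X 0 x < t}).toReal := by
    have h1 : Y 0 = Set.indicator (X 0 ⁻¹' Set.Iio t) (fun _ => (1 : ℝ)) := by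
      ext x; simp [hY, hφ, Set.indicator_apply, Set.mem_preimage]; rfl
    rw [h1, MeasureTheory.integral_indicator (hmeas 0 measurableSet_Iio), setIntegral_const]
    have : X 0 ⁻¹' Set.Iio t = {x | X 0 x < t} := rfl
    rw [this, smul_eq_mul, mul_one]
    rfl
  have := strong_law_ae_real Y hint hindep' hident'
  rw [hmean] at this
  filter_upwards [this] with x hx
  convert hx using 2 with n
  congr 1
  rw [hY]
  simp only [Function.comp_apply, hφ, Set.indicator_apply, Set.mem_Iio]
  rw [Finset.sum_boole]


/-- Proposition 3.1: if `ω_1, ω_2, …` are i.i.d. on `[-a/2, a/2]` with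
continuous strictly increasing distribution function `F`, `os n i` denotes the
`i`-th order statistic of the first `n` samples (a strictly increasing a.s.
rearrangement), and `ν_n(i) = n ∫_{(i-1)/n}^{i/n} F⁻¹`, then
`max_{i ∈ [n]} |os n i − ν_n(i)| → 0` almost surely. -/
theorem order_statistics_converge (a : ℝ) (ha : 0 < a)
    (Ω : Type*) [MeasureSpace Ω] [IsProbabilityMeasure (ℙ : Measure Ω)]
    (X : ℕ → Ω → ℝ) (hmeas : ∀ i, Measurable (X i))
    (hindep : iIndepFun X ℙ)
    (hident : ∀ i, IdentDistrib (X i) (X 0) ℙ ℙ)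
    (hsupp : ∀ i, ∀ᵐ x ∂(ℙ : Measure Ω), X i x ∈ Set.Icc (-(a/2)) (a/2))
    (F : ℝ → ℝ) (hF : ∀ t, F t = ((ℙ : Measure Ω) {x | X 0 x < t}).toReal)
    (hFcont : ContinuousOn F (Set.Icc (-(a/2)) (a/2)))
    (hFmono : StrictMonoOn F (Set.Icc (-(a/2)) (a/2)))
    (Finv : ℝ → ℝ)
    (hFinv : ∀ t ∈ Set.Icc (-(a/2)) (a/2), Finv (F t) = t)
    (hFinvCont : ContinuousOn Finv (Set.Icc (0 : ℝ) 1))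
    (os : ℕ → ℕ → Ω → ℝ)
    (hos : ∀ᵐ x ∂(ℙ : Measure Ω), ∀ n : ℕ,
      (∃ e : Equiv.Perm (Fin n), ∀ i : Fin n, os n ((i : ℕ) + 1) x = X (e i) x) ∧
      StrictMonoOn (fun i : ℕ => os n i x) (Set.Icc 1 n)) :
    ∀ᵐ x ∂(ℙ : Measure Ω),
      Tendsto (fun n : ℕ =>
          ⨆ i ∈ Finset.Icc 1 n,
            |os n i x - (n : ℝ) * ∫ y in (((i : ℝ) - 1)/n)..((i : ℝ)/n), Finv y|)
        atTop (𝓝 0) := by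
  have h2a : -(a/2) ≤ a/2 := by linarith
  -- basic properties of F
  have hFmonoG : Monotone F := by
    intro s t hst
    rw [hF s, hF t]
    exact ENNReal.toReal_mono (measure_ne_top _ _)
      (measure_mono (fun x hx => lt_of_lt_of_le hx hst))
  have hF0 : ∀ t, 0 ≤ F t := fun t => by rw [hF t]; exact ENNReal.toReal_nonneg
  have hF1 : ∀ t, F t ≤ 1 := fun t => by
    rw [hF t]
    have h := prob_le_one (μ := (ℙ : Measure Ω)) (s := {x | X 0 x < t})
    have := ENNReal.toReal_mono (by norm_num) h
    simpa using this
  -- the support is respected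
  have hnull : (ℙ : Measure Ω) {x | X 0 x ∉ Set.Icc (-(a/2)) (a/2)} = 0 := by
    simpa [ae_iff] using hsupp 0
  have hFbot : F (-(a/2)) = 0 := by
    rw [hF]
    have hz : (ℙ : Measure Ω) {x | X 0 x < -(a/2)} = 0 := by
      refine measure_mono_null ?_ hnull
      intro x hx
      simp only [Set.mem_setOf_eq, Set.mem_Icc] at *
      intro hcon
      linarith [hcon.1]
    rw [hz]; simp
  -- no ties: X 0 ≠ X 1 a.s.
  have hne : ∀ᵐ x ∂(ℙ : Measure Ω), X 0 x ≠ X 1 x := by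
    filter_upwards [hos] with x hx
    obtain ⟨⟨e, he⟩, hmono⟩ := hx 2
    have h12 : os 2 1 x < os 2 2 x := by
      have := hmono (a := 1) (b := 2) ⟨le_refl 1, by norm_num⟩ ⟨by norm_num, le_refl 2⟩
        (by norm_num)
      simpa using this
    have he0 : os 2 1 x = X (e 0) x := by simpa using he 0
    have he1 : os 2 2 x = X (e 1) x := by simpa using he 1
    have hne' : X (e 0) x ≠ X (e 1) x := by
      rw [← he0, ← he1]; exact ne_of_lt h12
    have hne01 : e 0 ≠ e 1 := e.injective.ne (by decide)
    have hcases : ∀ m : Fin 2, m = 0 ∨ m = 1 := by decide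
    rcases hcases (e 0) with h0 | h0 <;> rcases hcases (e 1) with hh1 | hh1
    · exact absurd (h0.trans hh1.symm) hne01
    · rw [h0, hh1] at hne'; exact hne'
    · rw [h0, hh1] at hne'; exact fun hcon => hne' hcon.symm
    · exact absurd (h0.trans hh1.symm) hne01
  -- no atom at a/2
  have hp : (ℙ : Measure Ω) (X 0 ⁻¹' {a/2}) = 0 := by
    by_contra hp0
    have hind01 : IndepFun (X 0) (X 1) (ℙ : Measure Ω) := hindep.indepFun (by norm_num)
    have hEq := hind01.measure_inter_preimage_eq_mul {a/2} {a/2}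
      (measurableSet_singleton _) (measurableSet_singleton _)
    have h1eq : (ℙ : Measure Ω) (X 1 ⁻¹' {a/2}) = (ℙ : Measure Ω) (X 0 ⁻¹' {a/2}) :=
      (hident 1).measure_mem_eq (measurableSet_singleton _)
    have hsub : X 0 ⁻¹' {a/2} ∩ X 1 ⁻¹' {a/2} ⊆ {x | X 0 x = X 1 x} := by
      intro x hx
      have h0 : X 0 x = a/2 := hx.1
      have h1 : X 1 x = a/2 := hx.2
      simp only [Set.mem_setOf_eq]
      rw [h0, h1]
    have hzero : (ℙ : Measure Ω) {x | X 0 x = X 1 x} = 0 := by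
      have := hne
      rw [ae_iff] at this
      simpa using this
    have := measure_mono_null hsub hzero
    rw [hEq, h1eq] at this
    exact hp0 (mul_self_eq_zero.1 this)
  have hFtop : F (a/2) = 1 := by
    rw [hF]
    have hcompl : (ℙ : Measure Ω) {x | X 0 x < a/2}ᶜ = 0 := by
      have hsub : {x | X 0 x < a/2}ᶜ ⊆
          (X 0 ⁻¹' {a/2}) ∪ {x | X 0 x ∉ Set.Icc (-(a/2)) (a/2)} := by
        intro x hx
        simp only [Set.mem_compl_iff, Set.mem_setOf_eq, not_lt] at hx
        rcases eq_or_lt_of_le hx with h | h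
        · exact Or.inl (by simp [Set.mem_preimage, h.symm])
        · refine Or.inr ?_
          simp only [Set.mem_setOf_eq, Set.mem_Icc]
          intro hcon
          linarith [hcon.2]
      exact measure_mono_null hsub (measure_union_null hp hnull)
    have hmeas' : MeasurableSet {x | X 0 x < a/2} := hmeas 0 measurableSet_Iio
    have hc := measure_compl hmeas' (measure_ne_top (ℙ : Measure Ω) _)
    rw [hcompl, measure_univ] at hc
    have h1le : 1 ≤ (ℙ : Measure Ω) {x | X 0 x < a/2} := tsub_eq_zero_iff_le.1 hc.symm
    have : (ℙ : Measure Ω) {x | X 0 x < a/2} = 1 := le_antisymm prob_le_one h1le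
    rw [this]; simp
  -- grid points via surjectivity of F
  have hsurj : ∀ p ∈ Set.Icc (0:ℝ) 1, ∃ t ∈ Set.Icc (-(a/2)) (a/2), F t = p := by
    intro p hp
    have h := intermediate_value_Icc h2a hFcont
    rw [hFbot, hFtop] at h
    obtain ⟨t, ht, hFt⟩ := h hp
    exact ⟨t, ht, hFt⟩
  have hSex : ∀ q : ℚ, ∃ t, t ∈ Set.Icc (-(a/2)) (a/2) ∧ F t = max 0 (min (q:ℝ) 1) := by
    intro q
    obtain ⟨t, ht, hFt⟩ := hsurj (max 0 (min (q:ℝ) 1))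
      ⟨le_max_left _ _, max_le (by norm_num) (min_le_right _ _)⟩
    exact ⟨t, ht, hFt⟩
  choose S hSmem hSval using hSex
  -- LLN along all rational grid points
  have hae1 : ∀ᵐ x ∂(ℙ : Measure Ω), ∀ q : ℚ,
      Tendsto (fun n : ℕ =>
        (((Finset.range n).filter (fun j => X j x < S q)).card : ℝ) / n)
        atTop (𝓝 (F (S q))) := by
    rw [ae_all_iff]
    intro q
    have h := lln_indicator X hmeas hindep hident (S q)
    simpa only [← hF] using h
  have hae2 : ∀ᵐ x ∂(ℙ : Measure Ω), ∀ j, X j x ∈ Set.Icc (-(a/2)) (a/2) :=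
    ae_all_iff.2 hsupp
  filter_upwards [hae1, hae2, hos] with x h1 h2 h3
  -- now a deterministic argument
  rw [Metric.tendsto_nhds]
  intro ε εpos
  obtain ⟨δ, δpos, hδ⟩ := Metric.uniformContinuousOn_iff.1
    (isCompact_Icc.uniformContinuousOn_of_continuous hFinvCont) (ε/4) (by positivity)
  obtain ⟨k', hk'⟩ := exists_nat_one_div_lt (show (0:ℝ) < δ/2 by positivity)
  set k := k' + 1 with hkdef
  have hk1 : 1 ≤ k := by omega
  have hkδ : 1/(k:ℝ) < δ/2 := by
    have : ((k:ℝ)) = (k':ℝ) + 1 := by push_cast [hkdef]; ring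
    rw [this]; exact hk'
  set ts : ℕ → ℝ := fun j => S ((j : ℚ)/(k : ℚ)) with hts_def
  have hkpos : (0:ℝ) < k := by positivity
  have hts : ∀ j ≤ k, F (ts j) = (j:ℝ)/k := by
    intro j hj
    rw [hts_def]
    simp only
    rw [hSval]
    push_cast
    have hk'pos : (0:ℝ) < (k':ℝ) + 1 := by positivity
    have hle1 : (j:ℝ)/((k':ℝ)+1) ≤ 1 := by
      rw [div_le_one hk'pos]
      have hjk : (j:ℝ) ≤ (k:ℝ) := by exact_mod_cast hj
      rw [hkdef] at hjk
      push_cast at hjk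
      linarith
    have h0le : (0:ℝ) ≤ (j:ℝ)/((k':ℝ)+1) := by positivity
    rw [hkdef]; push_cast
    rw [min_eq_left hle1, max_eq_right h0le]
  have c1 : ∀ᶠ n : ℕ in atTop, ∀ j ∈ Finset.range (k+1),
      |(((Finset.range n).filter (fun m => X m x < ts j)).card : ℝ) / n - F (ts j)| < δ/2 := by
    rw [eventually_all_finset]
    intro j hj
    have h := Metric.tendsto_nhds.1 (h1 ((j : ℚ)/(k : ℚ))) (δ/2) (by positivity)
    filter_upwards [h] with n hn
    rw [Real.dist_eq] at hn
    exact hn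
  have c2 : ∀ᶠ n : ℕ in atTop, (1:ℝ)/n < δ :=
    tendsto_one_div_atTop_nhds_zero_nat.eventually (gt_mem_nhds δpos)
  have c3 : ∀ᶠ n : ℕ in atTop, 1 ≤ n := eventually_ge_atTop 1
  filter_upwards [c1, c2, c3] with n hc1 hc2 hc3
  have npos : (0:ℝ) < n := by exact_mod_cast hc3
  set Hn : ℝ → ℝ := fun t => (((Finset.range n).filter (fun j => X j x < t)).card : ℝ) / n
    with hHn_def
  have hHmono : Monotone Hn := by
    intro s t hst
    rw [hHn_def]
    simp only
    have hcard : ((Finset.range n).filter (fun j => X j x < s)).card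
        ≤ ((Finset.range n).filter (fun j => X j x < t)).card :=
      Finset.card_le_card (Finset.monotone_filter_right _
        (fun j _ hjs => lt_of_lt_of_le hjs hst))
    exact div_le_div_of_nonneg_right (by exact_mod_cast hcard) npos.le
  have hH0 : ∀ t, 0 ≤ Hn t := fun t => by positivity
  have hH1 : ∀ t, Hn t ≤ 1 := by
    intro t
    rw [hHn_def]
    simp only
    rw [div_le_one npos]
    exact_mod_cast (Finset.card_filter_le _ _).trans (le_of_eq (Finset.card_range n))
  have hU : ∀ t, |Hn t - F t| < δ :=
    unif_bound F Hn hFmonoG hHmono hF0 hF1 hH0 hH1 k hk1 ts hts δ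
      (fun j hj => hc1 j (Finset.mem_range.2 (by omega))) hkδ
  -- per index bound
  have key : ∀ i ∈ Finset.Icc 1 n,
      |os n i x - (n : ℝ) * ∫ y in (((i : ℝ) - 1)/n)..((i : ℝ)/n), Finv y| ≤ ε/2 := by
    intro i hi
    obtain ⟨h1i, hin⟩ := Finset.mem_Icc.1 hi
    obtain ⟨⟨e, he⟩, hmono⟩ := h3 n
    set T := os n i x with hT_def
    set s : ℝ := ((i:ℝ) - 1)/n with hs_def
    have him : i - 1 < n := by omega
    have hTmem : T ∈ Set.Icc (-(a/2)) (a/2) := by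
      have h := he ⟨i - 1, him⟩
      simp only at h
      have heq : (i - 1) + 1 = i := by omega
      rw [heq] at h
      rw [hT_def, h]
      exact h2 _
    have hcount := count_below n (fun j => X j x) (fun m => os n m x) e he hmono i h1i hin
    have hHnT : Hn T = s := by
      rw [hHn_def]
      simp only
      rw [hcount, hs_def]
      congr 1
      push_cast [h1i]
      ring
    have hUT := hU T
    rw [hHnT] at hUT
    have hs0 : (0:ℝ) ≤ s := by
      rw [hs_def]
      apply div_nonneg ?_ npos.le
      have : (1:ℝ) ≤ (i:ℝ) := by exact_mod_cast h1i
      linarith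
    have hin' : (i:ℝ) ≤ n := by exact_mod_cast hin
    have hs01 : s ∈ Set.Icc (0:ℝ) 1 := by
      refine ⟨hs0, ?_⟩
      rw [hs_def, div_le_one npos]
      linarith
    have hFT01 : F T ∈ Set.Icc (0:ℝ) 1 := ⟨hF0 T, hF1 T⟩
    have hA : |Finv (F T) - Finv s| < ε/4 := by
      have := hδ (F T) hFT01 s hs01 (by rw [Real.dist_eq]; rw [abs_sub_comm]; exact hUT)
      rw [Real.dist_eq] at this
      exact this
    have hFinvT : Finv (F T) = T := hFinv T hTmem
    have hss : s ≤ (i:ℝ)/n := by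
      rw [hs_def]
      exact div_le_div_of_nonneg_right (by linarith) npos.le
    have hilen : (i:ℝ)/n - s = 1/n := by rw [hs_def]; field_simp; ring
    have hsub01 : Set.uIcc s ((i:ℝ)/n) ⊆ Set.Icc (0:ℝ) 1 := by
      rw [Set.uIcc_of_le hss]
      exact Set.Icc_subset_Icc hs01.1 ((div_le_one npos).2 hin')
    have hInt : IntervalIntegrable Finv MeasureTheory.volume s ((i:ℝ)/n) :=
      (hFinvCont.mono hsub01).intervalIntegrable
    have hbound : ∀ y ∈ Set.uIoc s ((i:ℝ)/n), ‖Finv y - Finv s‖ ≤ ε/4 := by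
      intro y hy
      rw [Set.uIoc_of_le hss] at hy
      have hy01 : y ∈ Set.Icc (0:ℝ) 1 := hsub01 (by rw [Set.uIcc_of_le hss]; exact Set.Ioc_subset_Icc_self hy)
      have hys : |y - s| < δ := by
        rw [abs_of_nonneg (by linarith [hy.1])]
        have : y ≤ (i:ℝ)/n := hy.2
        have h1n : (i:ℝ)/n - s = 1/n := hilen
        linarith [hc2]
      have := hδ y hy01 s hs01 (by rw [Real.dist_eq]; exact hys)
      rw [Real.dist_eq] at this
      rw [Real.norm_eq_abs]
      linarith
    have hbint : |∫ y in s..((i:ℝ)/n), (Finv y - Finv s)| ≤ (ε/4) * (1/n) := by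
      have h := intervalIntegral.norm_integral_le_of_norm_le_const hbound
      rw [Real.norm_eq_abs] at h
      calc |∫ y in s..((i:ℝ)/n), (Finv y - Finv s)| ≤ (ε/4) * |(i:ℝ)/n - s| := h
        _ = (ε/4) * (1/n) := by rw [hilen, abs_of_nonneg (by positivity)]
    have hintdiff : ∫ y in s..((i:ℝ)/n), (Finv y - Finv s)
        = (∫ y in s..((i:ℝ)/n), Finv y) - (1/n) * Finv s := by
      rw [intervalIntegral.integral_sub hInt intervalIntegrable_const,
        intervalIntegral.integral_const, hilen, smul_eq_mul]
    have hν : |(n:ℝ) * (∫ y in s..((i:ℝ)/n), Finv y) - Finv s| ≤ ε/4 := by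
      have heq : (n:ℝ) * (∫ y in s..((i:ℝ)/n), Finv y) - Finv s
          = (n:ℝ) * ∫ y in s..((i:ℝ)/n), (Finv y - Finv s) := by
        rw [hintdiff]
        field_simp
      rw [heq, abs_mul, abs_of_nonneg npos.le]
      calc (n:ℝ) * |∫ y in s..((i:ℝ)/n), (Finv y - Finv s)| ≤ (n:ℝ) * ((ε/4) * (1/n)) :=
            mul_le_mul_of_nonneg_left hbint npos.le
        _ = ε/4 := by field_simp
    have hTs : |T - Finv s| ≤ ε/4 := by
      rw [← hFinvT]
      exact hA.le
    calc |T - (n : ℝ) * ∫ y in s..((i:ℝ)/n), Finv y|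
        = |(T - Finv s) + (Finv s - (n : ℝ) * ∫ y in s..((i:ℝ)/n), Finv y)| := by ring_nf
      _ ≤ |T - Finv s| + |Finv s - (n : ℝ) * ∫ y in s..((i:ℝ)/n), Finv y| := abs_add_le _ _
      _ ≤ ε/4 + ε/4 := by
          refine add_le_add hTs ?_
          rw [abs_sub_comm]
          exact hν
      _ = ε/2 := by ring
  have hsup_le : (⨆ i ∈ Finset.Icc 1 n,
      |os n i x - (n : ℝ) * ∫ y in (((i : ℝ) - 1)/n)..((i : ℝ)/n), Finv y|) ≤ ε/2 :=
    Real.iSup_le (fun i => Real.iSup_le (fun hi => key i hi) (by positivity)) (by positivity)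
  have hsup_nonneg : 0 ≤ ⨆ i ∈ Finset.Icc 1 n,
      |os n i x - (n : ℝ) * ∫ y in (((i : ℝ) - 1)/n)..((i : ℝ)/n), Finv y| :=
    Real.iSup_nonneg (fun i => Real.iSup_nonneg (fun _ => abs_nonneg _))
  rw [Real.dist_eq, sub_zero, abs_of_nonneg hsup_nonneg]
  linarith
end

section
/- Fix p ∈ (0,1], K > 0, a > 0 with pK/a ≥ 2/π. Then there exists C > 0 satisfying C = (pKC/a)·(arcsin(a/(2pKC)) + (a/(2pKC))·√(1 − (a/(2pKC))²)), i.e. the self-consistency equation C = ∫₀¹ √(1 − (a(x−1/2)/(pKC))²) dx has a positive solution. Conversely, if pK/a < 2/π, no positive solution C with a/(2pKC) ≤ 1 exists. -/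
open Real

private lemma f_le_pi_div_two (s : ℝ) (h1 : s ≤ 1) :
    arcsin s + s * Real.sqrt (1 - s ^ 2) ≤ π / 2 := by
  have hsin : Real.sqrt (1 - s ^ 2) = Real.sin (Real.arccos s) := (Real.sin_arccos s).symm
  have hnn : 0 ≤ Real.sin (Real.arccos s) :=
    Real.sin_nonneg_of_nonneg_of_le_pi (Real.arccos_nonneg s) (Real.arccos_le_pi s)
  have h2 : s * Real.sqrt (1 - s ^ 2) ≤ Real.arccos s := by
    rw [hsin]
    calc s * Real.sin (Real.arccos s) ≤ 1 * Real.sin (Real.arccos s) :=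
          mul_le_mul_of_nonneg_right h1 hnn
      _ = Real.sin (Real.arccos s) := one_mul _
      _ ≤ Real.arccos s := Real.sin_le (Real.arccos_nonneg s)
  have h3 := Real.arccos_eq_pi_div_two_sub_arcsin s
  linarith

/-- Existence of a positive solution `C` of the self-consistency equation
`C = (pKC/a)(arcsin(a/(2pKC)) + (a/(2pKC))√(1 − (a/(2pKC))²))`
iff `pK/a ≥ 2/π`; the converse part states nonexistence of a positive
solution with `a/(2pKC) ≤ 1` when `pK/a < 2/π`. -/
theorem selfconsistency_solution (p K a : ℝ)
    (hp : p ∈ Set.Ioc (0 : ℝ) 1) (hK : 0 < K) (ha : 0 < a) :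
    (2 / π ≤ p * K / a →
      ∃ C : ℝ, 0 < C ∧
        C = (p * K * C / a) *
          (arcsin (a / (2 * p * K * C)) +
            (a / (2 * p * K * C)) * Real.sqrt (1 - (a / (2 * p * K * C)) ^ 2))) ∧
    (p * K / a < 2 / π →
      ¬ ∃ C : ℝ, 0 < C ∧ a / (2 * p * K * C) ≤ 1 ∧
        C = (p * K * C / a) *
          (arcsin (a / (2 * p * K * C)) +
            (a / (2 * p * K * C)) * Real.sqrt (1 - (a / (2 * p * K * C)) ^ 2))) := by
  have hp0 : 0 < p := hp.1
  have hpK : 0 < p * K := mul_pos hp0 hK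
  have hπ : (0:ℝ) < π := Real.pi_pos
  set b : ℝ := p * K / a with hb
  have hb0 : 0 < b := div_pos hpK ha
  constructor
  · intro h
    -- 1/b ∈ [0, π/2]
    have hinv : 1 / b ≤ π / 2 := by
      rw [div_le_div_iff₀ hb0 two_pos]
      rw [div_le_iff₀ hπ] at h
      linarith
    have hinv0 : 0 < 1 / b := by positivity
    set f : ℝ → ℝ := fun s => arcsin s + s * Real.sqrt (1 - s ^ 2) with hf
    have hcont : ContinuousOn f (Set.Icc 0 1) := by
      apply ContinuousOn.add Real.continuous_arcsin.continuousOn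
      exact (continuous_id.mul (Real.continuous_sqrt.comp (by continuity))).continuousOn
    have hf0 : f 0 = 0 := by simp [hf]
    have hf1 : f 1 = π / 2 := by
      simp [hf, Real.arcsin_one]
    have : (1/b) ∈ Set.Icc (f 0) (f 1) := by
      rw [hf0, hf1]; exact ⟨hinv0.le, hinv⟩
    obtain ⟨s, hs, hfs⟩ := intermediate_value_Icc zero_le_one hcont this
    have hs0 : 0 < s := by
      rcases lt_or_eq_of_le hs.1 with h' | h'
      · exact h'
      · exfalso; rw [← h'] at hfs; rw [hf0] at hfs; linarith
    refine ⟨a / (2 * p * K * s), by positivity, ?_⟩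
    have hC : a / (2 * p * K * (a / (2 * p * K * s))) = s := by
      field_simp
    rw [hC]
    have hfs' : arcsin s + s * Real.sqrt (1 - s ^ 2) = 1 / b := hfs
    rw [hfs']
    rw [hb]
    field_simp
  · intro h
    rintro ⟨C, hC0, hs1, heq⟩
    set s : ℝ := a / (2 * p * K * C) with hsdef
    have hs0 : 0 < s := by positivity
    have hkey : p * K * C / a = 1 / (2 * s) := by
      rw [hsdef]; field_simp
    rw [hkey] at heq
    have hle := f_le_pi_div_two s hs1
    -- from heq : C = 1/(2s) * (f s); also C = a/(2 p K s) ... derive 1 = b * f s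
    have hCs : 2 * s * C = a / (p*K) := by
      rw [hsdef]; field_simp
    have h1 : 1 / b = arcsin s + s * Real.sqrt (1 - s ^ 2) := by
      have h2 : 2 * s * C = (arcsin s + s * Real.sqrt (1 - s ^ 2)) := by
        rw [heq]; field_simp
      rw [← h2, hCs, hb]
      field_simp
    -- but 1/b > π/2
    have h2 : π / 2 * b < π / 2 * (2 / π) := mul_lt_mul_of_pos_left h (by positivity)
    have h3 : π / 2 * (2 / π) = 1 := by field_simp
    have h4 : π / 2 < 1 / b := (lt_div_iff₀ hb0).mpr (by linarith)
    linarith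
end

section
/- Let ω ∈ L²([0,1]) with Ω := ∫₀¹ ω(x) dx, and suppose C > 0 satisfies C = ∫₀¹ √(1 − ((ω(x) − Ω)/(pKC))²) dx with |ω(x) − Ω| ≤ pKC a.e. Then u(t,x) = arcsin((ω(x) − Ω)/(pKC)) + Ωt + θ solves the continuum Kuramoto equation ∂u/∂t = ω(x) + pK ∫₀¹ sin(u(t,y) − u(t,x)) dy for every θ ∈ ℝ. -/
open Real MeasureTheory intervalIntegral

/-- For `ω ∈ L²([0,1])` with mean `Ω` and `C > 0` satisfying the
self-consistency equation with `|ω(x) − Ω| ≤ pKC` a.e., the rotating wave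
`u(t,x) = arcsin((ω(x) − Ω)/(pKC)) + Ωt + θ` solves the continuum Kuramoto
equation (its time derivative is `Ω`), for a.e. `x ∈ [0,1]`. -/
theorem rotating_wave_solution (p K : ℝ)
    (hp : p ∈ Set.Ioc (0 : ℝ) 1) (hK : 0 < K)
    (ω : ℝ → ℝ)
    (hω : MemLp ω 2 (volume.restrict (Set.Icc (0 : ℝ) 1)))
    (Ω : ℝ) (hΩ : Ω = ∫ x in (0 : ℝ)..1, ω x)
    (C : ℝ) (hC : 0 < C)
    (hbd : ∀ᵐ x ∂(volume.restrict (Set.Icc (0 : ℝ) 1)), |ω x - Ω| ≤ p * K * C)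
    (hsc : C = ∫ x in (0 : ℝ)..1,
        Real.sqrt (1 - ((ω x - Ω) / (p * K * C)) ^ 2))
    :
    ∀ θ t : ℝ, ∀ᵐ x ∂(volume.restrict (Set.Icc (0 : ℝ) 1)),
      HasDerivAt
        (fun s : ℝ => arcsin ((ω x - Ω) / (p * K * C)) + Ω * s + θ)
        (ω x + p * K * ∫ y in (0 : ℝ)..1,
          Real.sin ((arcsin ((ω y - Ω) / (p * K * C)) + Ω * t + θ) -
            (arcsin ((ω x - Ω) / (p * K * C)) + Ω * t + θ))) t := by
  intro θ t
  have hp0 : 0 < p := hp.1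
  have ha : 0 < p * K * C := by positivity
  -- integrability of ω on [0,1]
  have hωint : IntegrableOn ω (Set.Icc (0:ℝ) 1) volume := hω.integrable one_le_two
  have hiω : IntervalIntegrable ω volume 0 1 := by
    rw [intervalIntegrable_iff]
    exact hωint.mono_set
      (by rw [Set.uIoc_of_le (by norm_num : (0:ℝ) ≤ 1)]; exact Set.Ioc_subset_Icc_self)
  have hig : IntervalIntegrable (fun y => (ω y - Ω) / (p * K * C)) volume 0 1 :=
    (hiω.sub (intervalIntegrable_const)).div_const (p * K * C)
  -- mean zero
  have hmean : (∫ y in (0:ℝ)..1, (ω y - Ω) / (p * K * C)) = 0 := by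
    have h0 : (∫ y in (0:ℝ)..1, (ω y - Ω)) = 0 := by
      rw [intervalIntegral.integral_sub hiω intervalIntegrable_const,
        intervalIntegral.integral_const]
      simp [hΩ]
    simp only [div_eq_mul_inv]
    rw [intervalIntegral.integral_mul_const, h0, zero_mul]
  -- measurability
  have hmeasIoc : AEStronglyMeasurable ω (volume.restrict (Set.Ioc (0:ℝ) 1)) :=
    hω.aestronglyMeasurable.mono_measure
      (Measure.restrict_mono Set.Ioc_subset_Icc_self le_rfl)
  -- integrability of sqrt term
  have hsqbd : ∀ s : ℝ, ‖Real.sqrt (1 - s ^ 2)‖ ≤ 1 := by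
    intro s
    rw [Real.norm_eq_abs, abs_of_nonneg (Real.sqrt_nonneg _)]
    calc Real.sqrt (1 - s ^ 2) ≤ Real.sqrt 1 :=
          Real.sqrt_le_sqrt (by nlinarith [sq_nonneg s])
      _ = 1 := Real.sqrt_one
  have hisq : IntervalIntegrable
      (fun y => Real.sqrt (1 - ((ω y - Ω) / (p * K * C)) ^ 2)) volume 0 1 := by
    rw [intervalIntegrable_iff, Set.uIoc_of_le (by norm_num : (0:ℝ) ≤ 1)]
    refine (integrable_const (1:ℝ)).mono' ?_ (Filter.Eventually.of_forall fun y => hsqbd _)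
    have hcont : Continuous (fun s : ℝ => Real.sqrt (1 - ((s - Ω) / (p * K * C)) ^ 2)) := by
      apply Real.continuous_sqrt.comp
      fun_prop
    exact hcont.comp_aestronglyMeasurable hmeasIoc
  -- a.e. x result
  filter_upwards [hbd] with x hx
  have hgx1 : -1 ≤ (ω x - Ω) / (p * K * C) := by
    rw [le_div_iff₀ ha]; linarith [(abs_le.mp hx).1]
  have hgx2 : (ω x - Ω) / (p * K * C) ≤ 1 := by
    rw [div_le_one ha]; exact (abs_le.mp hx).2
  -- the integral identity
  have hI : (∫ y in (0:ℝ)..1,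
      Real.sin ((arcsin ((ω y - Ω) / (p * K * C)) + Ω * t + θ) -
        (arcsin ((ω x - Ω) / (p * K * C)) + Ω * t + θ)))
      = -((ω x - Ω) / (p * K * C) * C) := by
    have step1 : (∫ y in (0:ℝ)..1,
        Real.sin ((arcsin ((ω y - Ω) / (p * K * C)) + Ω * t + θ) -
          (arcsin ((ω x - Ω) / (p * K * C)) + Ω * t + θ)))
        = ∫ y in (0:ℝ)..1,
          ((ω y - Ω) / (p * K * C) * Real.sqrt (1 - ((ω x - Ω) / (p * K * C)) ^ 2) -
            (ω x - Ω) / (p * K * C) * Real.sqrt (1 - ((ω y - Ω) / (p * K * C)) ^ 2)) := by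
      apply intervalIntegral.integral_congr_ae
      have hbd' : ∀ᵐ y ∂(volume : Measure ℝ), y ∈ Set.Icc (0:ℝ) 1 → |ω y - Ω| ≤ p * K * C :=
        (ae_restrict_iff' measurableSet_Icc).mp hbd
      filter_upwards [hbd'] with y hy hyI
      have hy' : |ω y - Ω| ≤ p * K * C := by
        apply hy
        rw [Set.uIoc_of_le (by norm_num : (0:ℝ) ≤ 1)] at hyI
        exact Set.Ioc_subset_Icc_self hyI
      have hgy1 : -1 ≤ (ω y - Ω) / (p * K * C) := by
        rw [le_div_iff₀ ha]; linarith [(abs_le.mp hy').1]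
      have hgy2 : (ω y - Ω) / (p * K * C) ≤ 1 := by
        rw [div_le_one ha]; exact (abs_le.mp hy').2
      have harg : (arcsin ((ω y - Ω) / (p * K * C)) + Ω * t + θ) -
          (arcsin ((ω x - Ω) / (p * K * C)) + Ω * t + θ)
          = arcsin ((ω y - Ω) / (p * K * C)) - arcsin ((ω x - Ω) / (p * K * C)) := by ring
      rw [harg, Real.sin_sub, Real.sin_arcsin hgy1 hgy2,
        Real.sin_arcsin hgx1 hgx2, Real.cos_arcsin, Real.cos_arcsin]
      ring
    rw [step1, intervalIntegral.integral_sub (hig.mul_const _) (hisq.const_mul _),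
      intervalIntegral.integral_mul_const, hmean, zero_mul,
      intervalIntegral.integral_const_mul, ← hsc]
    ring
  have key : ω x + p * K * (∫ y in (0:ℝ)..1,
      Real.sin ((arcsin ((ω y - Ω) / (p * K * C)) + Ω * t + θ) -
        (arcsin ((ω x - Ω) / (p * K * C)) + Ω * t + θ))) = Ω := by
    rw [hI]
    field_simp
    ring
  rw [key]
  simpa using (((hasDerivAt_id t).const_mul Ω).const_add
    (arcsin ((ω x - Ω) / (p * K * C)))).add_const θ
end

section
/- Let W ∈ L²([0,1]²) be nonnegative with esssup_x ∫₀¹ W(x,y) dy ≤ C₂ < ∞, let ω ∈ L²([0,1]), and let K > 0. Then the map 𝒦 : L²([0,1]) → L²([0,1]) defined by (𝒦u)(x) = ω(x) + K ∫₀¹ W(x,y) sin(u(y) − u(x)) dy is well-defined and globally Lipschitz continuous on L²([0,1]). -/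
open MeasureTheory Real
open scoped ENNReal NNReal

private lemma sin_lip (a b : ℝ) : |Real.sin a - Real.sin b| ≤ |a - b| := by
  rw [Real.sin_sub_sin]
  calc |2 * Real.sin ((a - b) / 2) * Real.cos ((a + b) / 2)|
      = 2 * |Real.sin ((a - b) / 2)| * |Real.cos ((a + b) / 2)| := by
        rw [abs_mul, abs_mul, abs_two]
    _ ≤ 2 * |(a - b) / 2| * 1 := by
        have h1 : |Real.sin ((a - b) / 2)| ≤ |(a - b) / 2| := Real.abs_sin_le_abs
        have h2 : |Real.cos ((a + b) / 2)| ≤ 1 := Real.abs_cos_le_one _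
        nlinarith [abs_nonneg (Real.sin ((a - b) / 2)), abs_nonneg ((a - b) / 2),
          abs_nonneg (Real.cos ((a + b) / 2))]
    _ = |a - b| := by rw [abs_div, abs_two]; ring

private lemma l2_mul_integrable {α : Type*} {m : MeasurableSpace α} {μ : Measure α}
    {f g : α → ℝ} (hf : MemLp f 2 μ) (hg : MemLp g 2 μ) :
    Integrable (fun x => f x * g x) μ := by
  have h : Integrable (fun x => (f x ^ 2 + g x ^ 2) / 2) μ :=
    (hf.integrable_sq.add hg.integrable_sq).div_const 2
  refine h.mono' (hf.1.mul hg.1) (Filter.Eventually.of_forall fun x => ?_)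
  rw [Real.norm_eq_abs, abs_mul]
  nlinarith [sq_nonneg (|f x| - |g x|), sq_abs (f x), sq_abs (g x)]

private lemma kernel_op_bound {μ : Measure ℝ} [IsFiniteMeasure μ] {W : ℝ → ℝ → ℝ} {g : ℝ → ℝ}
    (hWmeas : Measurable (Function.uncurry W)) (hWnn : ∀ x y, 0 ≤ W x y)
    (hgmeas : Measurable g)
    (hA_int : ∀ᵐ x ∂μ, Integrable (fun y => W x y * |g y|) μ) :
    eLpNorm (fun x => ∫ y, W x y * |g y| ∂μ) 2 μ ≤
      eLpNorm (Function.uncurry W) 2 (μ.prod μ) * eLpNorm g 2 μ := by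
  set G := eLpNorm g 2 μ with hG
  set SW := eLpNorm (Function.uncurry W) 2 (μ.prod μ) with hSW
  have h2 : ((2 : ℝ≥0∞)).toReal = 2 := by simp
  have hGf : G = (∫⁻ y, (‖g y‖₊ : ℝ≥0∞) ^ (2 : ℝ) ∂μ) ^ (1 / 2 : ℝ) := by
    simp only [hG, eLpNorm_eq_lintegral_rpow_enorm_toReal two_ne_zero ENNReal.ofNat_ne_top, h2, enorm_eq_nnnorm]
  have hoW : Measurable fun p : ℝ × ℝ => ENNReal.ofReal (Function.uncurry W p) :=
    ENNReal.measurable_ofReal.comp hWmeas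
  -- pointwise a.e. bound on the squared norm of the integral
  have hpt : ∀ᵐ x ∂μ, (‖∫ y, W x y * |g y| ∂μ‖₊ : ℝ≥0∞) ^ (2 : ℝ) ≤
      (∫⁻ y, ENNReal.ofReal (W x y) ^ (2 : ℝ) ∂μ) * G ^ (2 : ℝ) := by
    filter_upwards [hA_int] with x hx
    have hnn : 0 ≤ ∫ y, W x y * |g y| ∂μ :=
      integral_nonneg fun y => mul_nonneg (hWnn x y) (abs_nonneg _)
    have e1 : (‖∫ y, W x y * |g y| ∂μ‖₊ : ℝ≥0∞) =
        ∫⁻ y, ENNReal.ofReal (W x y) * (‖g y‖₊ : ℝ≥0∞) ∂μ := by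
      rw [← enorm_eq_nnnorm, ← ofReal_norm, Real.norm_eq_abs, abs_of_nonneg hnn,
        ofReal_integral_eq_lintegral_ofReal hx
          (Filter.Eventually.of_forall fun y => mul_nonneg (hWnn x y) (abs_nonneg _))]
      refine lintegral_congr fun y => ?_
      rw [ENNReal.ofReal_mul (hWnn x y), ← Real.enorm_eq_ofReal_abs, enorm_eq_nnnorm]
    have e2 : ∫⁻ y, ENNReal.ofReal (W x y) * (‖g y‖₊ : ℝ≥0∞) ∂μ ≤
        (∫⁻ y, ENNReal.ofReal (W x y) ^ (2 : ℝ) ∂μ) ^ (1 / 2 : ℝ) *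
          (∫⁻ y, (‖g y‖₊ : ℝ≥0∞) ^ (2 : ℝ) ∂μ) ^ (1 / 2 : ℝ) := by
      exact ENNReal.lintegral_mul_le_Lp_mul_Lq μ Real.HolderConjugate.two_two
        ((hoW.comp measurable_prodMk_left).aemeasurable)
        (hgmeas.nnnorm.coe_nnreal_ennreal.aemeasurable)
    calc (‖∫ y, W x y * |g y| ∂μ‖₊ : ℝ≥0∞) ^ (2 : ℝ)
        ≤ ((∫⁻ y, ENNReal.ofReal (W x y) ^ (2 : ℝ) ∂μ) ^ (1 / 2 : ℝ) *
            (∫⁻ y, (‖g y‖₊ : ℝ≥0∞) ^ (2 : ℝ) ∂μ) ^ (1 / 2 : ℝ)) ^ (2 : ℝ) := by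
          rw [e1]
          exact ENNReal.rpow_le_rpow e2 (by norm_num)
      _ = (∫⁻ y, ENNReal.ofReal (W x y) ^ (2 : ℝ) ∂μ) * G ^ (2 : ℝ) := by
          rw [ENNReal.mul_rpow_of_nonneg _ _ (by norm_num : (0:ℝ) ≤ 2),
            ← ENNReal.rpow_mul, hGf, ← ENNReal.rpow_mul]
          norm_num
  -- integrate the pointwise bound
  have hmain : ∫⁻ x, (‖∫ y, W x y * |g y| ∂μ‖₊ : ℝ≥0∞) ^ (2 : ℝ) ∂μ ≤
      SW ^ (2 : ℝ) * G ^ (2 : ℝ) := by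
    calc ∫⁻ x, (‖∫ y, W x y * |g y| ∂μ‖₊ : ℝ≥0∞) ^ (2 : ℝ) ∂μ
        ≤ ∫⁻ x, (∫⁻ y, ENNReal.ofReal (W x y) ^ (2 : ℝ) ∂μ) * G ^ (2 : ℝ) ∂μ :=
          lintegral_mono_ae hpt
      _ = (∫⁻ x, ∫⁻ y, ENNReal.ofReal (W x y) ^ (2 : ℝ) ∂μ ∂μ) * G ^ (2 : ℝ) := by
          refine lintegral_mul_const _ ?_
          exact (hoW.pow_const (2 : ℝ)).lintegral_prod_right'
      _ = SW ^ (2 : ℝ) * G ^ (2 : ℝ) := by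
          congr 1
          have : ∫⁻ x, ∫⁻ y, ENNReal.ofReal (W x y) ^ (2 : ℝ) ∂μ ∂μ =
              ∫⁻ p, ENNReal.ofReal (Function.uncurry W p) ^ (2 : ℝ) ∂(μ.prod μ) :=
            (lintegral_prod _ (hoW.pow_const (2 : ℝ)).aemeasurable).symm
          rw [this, hSW, eLpNorm_eq_lintegral_rpow_enorm_toReal two_ne_zero ENNReal.ofNat_ne_top, h2,
            ← ENNReal.rpow_mul]
          norm_num
          refine lintegral_congr fun p => ?_
          congr 1
          rw [← ofReal_norm, Real.norm_eq_abs, abs_of_nonneg]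
          exact hWnn p.1 p.2
  calc eLpNorm (fun x => ∫ y, W x y * |g y| ∂μ) 2 μ
      = (∫⁻ x, (‖∫ y, W x y * |g y| ∂μ‖₊ : ℝ≥0∞) ^ (2 : ℝ) ∂μ) ^ (1 / 2 : ℝ) := by
        simp only [eLpNorm_eq_lintegral_rpow_enorm_toReal two_ne_zero ENNReal.ofNat_ne_top, h2, enorm_eq_nnnorm]
    _ ≤ (SW ^ (2 : ℝ) * G ^ (2 : ℝ)) ^ (1 / 2 : ℝ) :=
        ENNReal.rpow_le_rpow hmain (by norm_num)
    _ = SW * G := by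
        rw [ENNReal.mul_rpow_of_nonneg _ _ (by norm_num : (0:ℝ) ≤ 1 / 2),
          ← ENNReal.rpow_mul, ← ENNReal.rpow_mul]
        norm_num

/-- The vector field `𝒦u = ω + K ∫₀¹ W(·,y) sin(u(y) − u(·)) dy` of the
continuum-limit equation maps `L²([0,1])` to itself and is globally
Lipschitz. -/
theorem CL_vector_field_lipschitz
    (W : ℝ → ℝ → ℝ) (ω : ℝ → ℝ) (K C₁ C₂ : ℝ) (hK : 0 < K)
    (μ : Measure ℝ) (hμ : μ = volume.restrict (Set.Icc (0 : ℝ) 1))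
    (hWmeas : Measurable (Function.uncurry W))
    (hWnn : ∀ x y, 0 ≤ W x y)
    (hWL2 : MemLp (Function.uncurry W) 2 (μ.prod μ))
    (hC₁ : ∀ᵐ y ∂μ, ∫ x, W x y ∂μ ≤ C₁)
    (hC₂ : ∀ᵐ x ∂μ, ∫ y, W x y ∂μ ≤ C₂)
    (hω : MemLp ω 2 μ) :
    ∃ L : ℝ, 0 ≤ L ∧
      ∀ u v : ℝ → ℝ, Measurable u → Measurable v →
        MemLp u 2 μ → MemLp v 2 μ →
        MemLp (fun x => ω x + K * ∫ y, W x y * Real.sin (u y - u x) ∂μ) 2 μ ∧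
        eLpNorm
          (fun x => (ω x + K * ∫ y, W x y * Real.sin (u y - u x) ∂μ) -
            (ω x + K * ∫ y, W x y * Real.sin (v y - v x) ∂μ)) 2 μ ≤
          ENNReal.ofReal L * eLpNorm (fun x => u x - v x) 2 μ := by
  haveI hfin : IsFiniteMeasure μ := by
    subst hμ
    refine ⟨?_⟩
    simp [Measure.restrict_apply_univ, Real.volume_Icc]
  have hμne : μ ≠ 0 := by
    intro h
    have h1 : μ Set.univ = ENNReal.ofReal 1 := by
      rw [hμ, Measure.restrict_apply_univ, Real.volume_Icc]; norm_num
    rw [h] at h1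
    simp at h1
  haveI : (MeasureTheory.ae μ).NeBot := ae_neBot.mpr hμne
  have hC₂0 : 0 ≤ C₂ := by
    obtain ⟨x, hx⟩ := hC₂.exists
    exact le_trans (integral_nonneg fun y => hWnn x y) hx
  -- basic integrability facts about W
  have hWint : Integrable (Function.uncurry W) (μ.prod μ) := hWL2.integrable one_le_two
  have hWrow : ∀ᵐ x ∂μ, Integrable (fun y => W x y) μ := hWint.prod_right_ae
  have hWrow2 : ∀ᵐ x ∂μ, MemLp (fun y => W x y) 2 μ := by
    filter_upwards [hWL2.integrable_sq.prod_right_ae] with x hx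
    exact (memLp_two_iff_integrable_sq
      ((hWmeas.comp measurable_prodMk_left).aestronglyMeasurable)).mpr hx
  set SW := eLpNorm (Function.uncurry W) 2 (μ.prod μ) with hSWdef
  have hSWlt : SW ≠ ⊤ := hWL2.2.ne
  refine ⟨K * (SW.toReal + C₂), by positivity, ?_⟩
  intro u v hu hv hu2 hv2
  -- measurability of the integral terms
  have hsinmeas : ∀ (w : ℝ → ℝ), Measurable w →
      Measurable fun x => ∫ y, W x y * Real.sin (w y - w x) ∂μ := by
    intro w hw
    have : StronglyMeasurable fun p : ℝ × ℝ => W p.1 p.2 * Real.sin (w p.2 - w p.1) :=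
      (hWmeas.mul ((hw.comp measurable_snd).sub (hw.comp measurable_fst)).sin).stronglyMeasurable
    exact this.integral_prod_right'.measurable
  -- per-x integrability of the sin integrands
  have hint : ∀ (w : ℝ → ℝ), Measurable w → ∀ x : ℝ, Integrable (fun y => W x y) μ →
      Integrable (fun y => W x y * Real.sin (w y - w x)) μ := by
    intro w hw x hx
    refine hx.mono' ((hWmeas.comp measurable_prodMk_left).mul
      ((hw.sub measurable_const).sin)).aestronglyMeasurable
      (Filter.Eventually.of_forall fun y => ?_)
    rw [Real.norm_eq_abs, abs_mul, abs_of_nonneg (hWnn x y)]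
    exact mul_le_of_le_one_right (hWnn x y)
      (abs_le.mpr ⟨Real.neg_one_le_sin _, Real.sin_le_one _⟩)
  -- the map is well defined (MemLp)
  have hmem : ∀ (w : ℝ → ℝ), Measurable w →
      MemLp (fun x => ω x + K * ∫ y, W x y * Real.sin (w y - w x) ∂μ) 2 μ := by
    intro w hw
    have hF : MemLp (fun x => ∫ y, W x y * Real.sin (w y - w x) ∂μ) 2 μ := by
      refine MemLp.of_bound (hsinmeas w hw).aestronglyMeasurable C₂ ?_
      filter_upwards [hWrow, hC₂] with x hx hx2
      rw [Real.norm_eq_abs]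
      calc |∫ y, W x y * Real.sin (w y - w x) ∂μ|
          ≤ ∫ y, |W x y * Real.sin (w y - w x)| ∂μ := by
            have := norm_integral_le_integral_norm (μ := μ)
              (f := fun y => W x y * Real.sin (w y - w x))
            simp only [Real.norm_eq_abs] at this
            exact this
        _ ≤ ∫ y, W x y ∂μ := by
            refine integral_mono (hint w hw x hx).abs hx fun y => ?_
            rw [abs_mul, abs_of_nonneg (hWnn x y)]
            exact mul_le_of_le_one_right (hWnn x y)
              (abs_le.mpr ⟨Real.neg_one_le_sin _, Real.sin_le_one _⟩)
        _ ≤ C₂ := hx2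
    exact hω.add (hF.const_mul K)
  refine ⟨hmem u hu, ?_⟩
  -- the Lipschitz bound
  set g : ℝ → ℝ := fun x => u x - v x with hgdef
  have hgmeas : Measurable g := hu.sub hv
  have hg2 : MemLp g 2 μ := hu2.sub hv2
  set G := eLpNorm g 2 μ with hGdef
  set A : ℝ → ℝ := fun x => ∫ y, W x y * |g y| ∂μ with hAdef
  have hAnn : ∀ x, 0 ≤ A x := fun x =>
    integral_nonneg fun y => mul_nonneg (hWnn x y) (abs_nonneg _)
  have hAmeas : Measurable A := by
    have : StronglyMeasurable fun p : ℝ × ℝ => W p.1 p.2 * |g p.2| :=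
      (hWmeas.mul ((hgmeas.comp measurable_snd).abs)).stronglyMeasurable
    exact this.integral_prod_right'.measurable
  have hA_int : ∀ᵐ x ∂μ, Integrable (fun y => W x y * |g y|) μ := by
    filter_upwards [hWrow2] with x hx
    have := (l2_mul_integrable hx hg2).abs
    refine this.congr (Filter.Eventually.of_forall fun y => ?_)
    simp only [abs_mul, abs_of_nonneg (hWnn x y)]
  -- pointwise a.e. bound of the difference
  have hDbd : ∀ᵐ x ∂μ,
      ‖(ω x + K * ∫ y, W x y * Real.sin (u y - u x) ∂μ) -
        (ω x + K * ∫ y, W x y * Real.sin (v y - v x) ∂μ)‖ ≤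
      ‖K * A x + K * C₂ * |g x|‖ := by
    filter_upwards [hWrow, hC₂, hA_int] with x hWx hC₂x hAx
    have hu_int := hint u hu x hWx
    have hv_int := hint v hv x hWx
    have hRHSnn : 0 ≤ K * A x + K * C₂ * |g x| := by
      have := hAnn x
      positivity
    rw [Real.norm_eq_abs, Real.norm_eq_abs, abs_of_nonneg hRHSnn]
    have key : |(∫ y, W x y * Real.sin (u y - u x) ∂μ) -
        (∫ y, W x y * Real.sin (v y - v x) ∂μ)| ≤ A x + C₂ * |g x| := by
      rw [← integral_sub hu_int hv_int]
      have hbd_int : Integrable (fun y => W x y * |g y| + W x y * |g x|) μ :=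
        hAx.add (hWx.mul_const _)
      calc |∫ y, (W x y * Real.sin (u y - u x) - W x y * Real.sin (v y - v x)) ∂μ|
          ≤ ∫ y, |W x y * Real.sin (u y - u x) - W x y * Real.sin (v y - v x)| ∂μ :=
            by
              have := norm_integral_le_integral_norm (μ := μ)
                (f := fun y => W x y * Real.sin (u y - u x) - W x y * Real.sin (v y - v x))
              simp only [Real.norm_eq_abs] at this
              exact this
        _ ≤ ∫ y, (W x y * |g y| + W x y * |g x|) ∂μ := by
            refine integral_mono (hu_int.sub hv_int).abs hbd_int fun y => ?_
            rw [← mul_sub, abs_mul, abs_of_nonneg (hWnn x y), ← mul_add]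
            refine mul_le_mul_of_nonneg_left ?_ (hWnn x y)
            calc |Real.sin (u y - u x) - Real.sin (v y - v x)|
                ≤ |(u y - u x) - (v y - v x)| := sin_lip _ _
              _ = |g y - g x| := by simp only [hgdef]; ring_nf
              _ ≤ |g y| + |g x| := abs_sub _ _
        _ = A x + (∫ y, W x y ∂μ) * |g x| := by
            rw [integral_add hAx (hWx.mul_const _), integral_mul_const]
        _ ≤ A x + C₂ * |g x| := by
            gcongr
    have : (ω x + K * ∫ y, W x y * Real.sin (u y - u x) ∂μ) -
        (ω x + K * ∫ y, W x y * Real.sin (v y - v x) ∂μ) =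
        K * ((∫ y, W x y * Real.sin (u y - u x) ∂μ) -
          (∫ y, W x y * Real.sin (v y - v x) ∂μ)) := by ring
    rw [this, abs_mul, abs_of_nonneg hK.le]
    calc K * |(∫ y, W x y * Real.sin (u y - u x) ∂μ) -
          (∫ y, W x y * Real.sin (v y - v x) ∂μ)|
        ≤ K * (A x + C₂ * |g x|) := by
          exact mul_le_mul_of_nonneg_left key hK.le
      _ = K * A x + K * C₂ * |g x| := by ring
  -- assemble via triangle inequality and the kernel bound
  have step1 : eLpNorm
      (fun x => (ω x + K * ∫ y, W x y * Real.sin (u y - u x) ∂μ) -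
        (ω x + K * ∫ y, W x y * Real.sin (v y - v x) ∂μ)) 2 μ ≤
      eLpNorm (fun x => K * A x + K * C₂ * |g x|) 2 μ := eLpNorm_mono_ae hDbd
  have hKA : eLpNorm (fun x => K * A x) 2 μ = ENNReal.ofReal K * eLpNorm A 2 μ := by
    have hsm : (fun x => K * A x) = K • A := rfl
    rw [hsm, eLpNorm_const_smul, Real.enorm_eq_ofReal hK.le]
  have hKCg : eLpNorm (fun x => K * C₂ * |g x|) 2 μ ≤
      ENNReal.ofReal (K * C₂) * G := by
    have hsm2 : (fun x => K * C₂ * |g x|) = (K * C₂) • (fun x => |g x|) := rfl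
    rw [hsm2, eLpNorm_const_smul, Real.enorm_eq_ofReal (by positivity : (0:ℝ) ≤ K * C₂)]
    have h2 : eLpNorm (fun x => |g x|) 2 μ = G := by
      rw [hGdef]
      simpa [Real.norm_eq_abs] using eLpNorm_norm g (p := (2 : ℝ≥0∞)) (μ := μ)
    rw [h2]
  have step2 : eLpNorm (fun x => K * A x + K * C₂ * |g x|) 2 μ ≤
      ENNReal.ofReal K * eLpNorm A 2 μ + ENNReal.ofReal (K * C₂) * G := by
    refine le_trans (eLpNorm_add_le
      ((hAmeas.const_mul K).aestronglyMeasurable)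
      ((hgmeas.abs.const_mul (K * C₂)).aestronglyMeasurable) one_le_two) ?_
    rw [hKA]
    exact add_le_add le_rfl hKCg
  have step3 : eLpNorm A 2 μ ≤ SW * G :=
    kernel_op_bound hWmeas hWnn hgmeas hA_int
  have final : ENNReal.ofReal K * (SW * G) + ENNReal.ofReal (K * C₂) * G =
      ENNReal.ofReal (K * (SW.toReal + C₂)) * G := by
    rw [ENNReal.ofReal_mul hK.le, ENNReal.ofReal_mul hK.le,
      ENNReal.ofReal_add ENNReal.toReal_nonneg hC₂0, ENNReal.ofReal_toReal hSWlt]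
    ring
  refine le_trans step1 (le_trans step2 ?_)
  rw [← final]
  exact add_le_add (mul_le_mul_right step3 _) le_rfl
end
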